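/- arXiv:1804.08309 — 2 statements merged into one kernel-verified Lean document; each statement's English description precedes it below -/
import Mathlib

section
/- A real binary form f of degree d has real rank at most r if and only if the degree-r graded piece (f^⊥)_r of its apolar ideal contains a nonzero form g ∈ ℝ[u,v]_r that splits into r pairwise non-proportional real linear factors. -/
open MvPolynomial

/-- The partial derivative `∂_x` as a linear endomorphism of `ℝ[x,y]`. -/
noncomputable def pd0 : Module.End ℝ (MvPolynomial (Fin 2) ℝ) :=
  (pderiv (0 : Fin 2)).toLinearMap

/-- The partial derivative `∂_y` as a linear endomorphism of `ℝ[x,y]`. -/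
noncomputable def pd1 : Module.End ℝ (MvPolynomial (Fin 2) ℝ) :=
  (pderiv (1 : Fin 2)).toLinearMap

/-- The action of a dual form `g(u,v)` on a binary form `f(x,y)` by substituting
`u = ∂_x`, `v = ∂_y`. -/
noncomputable def diffOp (g f : MvPolynomial (Fin 2) ℝ) : MvPolynomial (Fin 2) ℝ :=
  (AddMonoidAlgebra.coeff g).sum fun m c => c • ((pd0 ^ m 0 * pd1 ^ m 1) f)

/-- The linear binary form `a·x + b·y`. -/
noncomputable def linForm (a b : ℝ) : MvPolynomial (Fin 2) ℝ := C a * X 0 + C b * X 1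

/-- The real rank of a binary form of degree `d`: the least `r` admitting a
decomposition `f = ∑ cᵢ (aᵢ x + bᵢ y)^d`. -/
noncomputable def realRank (d : ℕ) (f : MvPolynomial (Fin 2) ℝ) : ℕ :=
  sInf {r | ∃ c a b : Fin r → ℝ, f = ∑ i, C (c i) * linForm (a i) (b i) ^ d}

/-!
Write `ℓ_{a,b} = a x + b y` and `D_g` for the operator `g(∂ₓ, ∂ᵧ)`. Since
`D_{au+bv} ℓ_{p,q}^d = d (ap + bq) ℓ_{p,q}^{d-1}`, the factor `au + bv` kills `ℓ_{p,q}^d` as soon as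
`(a, b) ⊥ (p, q)`. Hence if `f = ∑ cᵢ ℓᵢ^d` has at most `r` terms, the product of the linear forms
orthogonal to the `ℓᵢ`, completed by further pairwise non-proportional factors to exactly `r`,
annihilates `f`.

Conversely, on forms of degree `k` the kernel of `D_{au+bv}` is the line spanned by
`ℓ_{b,-a}^k`: both partial derivatives of a kernel element lie in the kernel again, and Euler's
identity reassembles it from them. If `(a₀u + b₀v) ∏_{i>0} (aᵢu + bᵢv)` kills `f`, then
`D_{∏_{i>0}} f` is therefore a multiple of a power of `ℓ_{b₀,-a₀}`. The remaining factors,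
being non-proportional to `a₀u + b₀v`, act on `ℓ_{b₀,-a₀}^d` by a nonzero scalar, so subtracting
a multiple of `ℓ_{b₀,-a₀}^d` from `f` leaves a form killed by one factor fewer, and induction
gives `f = ∑ cᵢ ℓ_{bᵢ,-aᵢ}^d`.
-/

theorem MvPolynomial.pderiv_pderiv_comm {R σ : Type*} [CommSemiring R] (i j : σ)
    (f : MvPolynomial σ R) : pderiv i (pderiv j f) = pderiv j (pderiv i f) := by
  classical
  induction f using MvPolynomial.induction_on' with
  | monomial m a =>
    simp only [pderiv_monomial, tsub_right_comm]
    congr 1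
    by_cases hij : i = j
    · subst hij; rfl
    · simp only [Finsupp.tsub_apply, ne_eq, hij, not_false_eq_true, Finsupp.single_eq_of_ne,
        tsub_zero, Ne.symm hij]
      ring
  | add p q hp hq => simp only [map_add, hp, hq]

noncomputable def pderivMonomialHom :
    Multiplicative (Fin 2 →₀ ℕ) →* Module.End ℝ (MvPolynomial (Fin 2) ℝ) where
  toFun m := pd0 ^ m.toAdd 0 * pd1 ^ m.toAdd 1
  map_one' := by simp
  map_mul' m n := by
    have hcomm : Commute pd0 pd1 := LinearMap.ext (pderiv_pderiv_comm 0 1)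
    simp only [toAdd_mul, Finsupp.add_apply, pow_add]
    exact (hcomm.pow_pow _ _).mul_mul_mul_comm _ _

noncomputable def diffOpHom : MvPolynomial (Fin 2) ℝ →ₐ[ℝ] Module.End ℝ (MvPolynomial (Fin 2) ℝ) :=
  AddMonoidAlgebra.lift ℝ _ (Fin 2 →₀ ℕ) pderivMonomialHom

theorem diffOp_eq_diffOpHom (g f : MvPolynomial (Fin 2) ℝ) : diffOp g f = diffOpHom g f := by
  rw [diffOp, diffOpHom, AddMonoidAlgebra.lift_apply]
  simp [Finsupp.sum, pderivMonomialHom]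

section DiffOp

variable (g h f : MvPolynomial (Fin 2) ℝ)

theorem diffOp_mul : diffOp (g * h) f = diffOp g (diffOp h f) := by
  simp only [diffOp_eq_diffOpHom, map_mul, Module.End.mul_apply]

theorem diffOp_one : diffOp 1 f = f := by
  simp only [diffOp_eq_diffOpHom, map_one, Module.End.one_apply]

theorem diffOp_add_left : diffOp (g + h) f = diffOp g f + diffOp h f := by
  simp only [diffOp_eq_diffOpHom, map_add, LinearMap.add_apply]

theorem diffOp_C (c : ℝ) : diffOp (C c) f = C c * f := by
  rw [diffOp_eq_diffOpHom, ← smul_eq_C_mul, ← algebraMap_eq, AlgHom.commutes,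
    Module.algebraMap_end_apply]

theorem diffOp_X (i : Fin 2) : diffOp (X i) f = pderiv i f := by
  rw [diffOp_eq_diffOpHom, diffOpHom, X, monomial, AddMonoidAlgebra.lsingle_apply,
    AddMonoidAlgebra.lift_single]
  fin_cases i <;> simp [pderivMonomialHom, pd0, pd1]

theorem diffOp_sub_right (f' : MvPolynomial (Fin 2) ℝ) :
    diffOp g (f - f') = diffOp g f - diffOp g f' := by
  simp only [diffOp_eq_diffOpHom, map_sub]

theorem diffOp_C_mul_right (c : ℝ) : diffOp g (C c * f) = C c * diffOp g f := by
  simp only [diffOp_eq_diffOpHom, ← smul_eq_C_mul, map_smul]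

theorem diffOp_sum_right {ι : Type*} (s : Finset ι) (F : ι → MvPolynomial (Fin 2) ℝ) :
    diffOp g (∑ i ∈ s, F i) = ∑ i ∈ s, diffOp g (F i) := by
  simp only [diffOp_eq_diffOpHom, map_sum]

theorem diffOp_zero_right : diffOp g 0 = 0 := by
  simp only [diffOp_eq_diffOpHom, map_zero]

theorem diffOp_pderiv (i : Fin 2) : diffOp g (pderiv i f) = pderiv i (diffOp g f) := by
  rw [← diffOp_X, ← diffOp_X, ← diffOp_mul, ← diffOp_mul, mul_comm]

theorem diffOp_eq_zero_of_dvd {g' : MvPolynomial (Fin 2) ℝ} (hg : g ∣ g')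
    (hf : diffOp g f = 0) : diffOp g' f = 0 := by
  obtain ⟨k, rfl⟩ := hg
  rw [mul_comm, diffOp_mul, hf, diffOp_zero_right]

theorem diffOp_linForm (a b : ℝ) :
    diffOp (linForm a b) f = C a * pderiv 0 f + C b * pderiv 1 f := by
  simp only [linForm, diffOp_add_left, diffOp_mul, diffOp_C, diffOp_X]

end DiffOp

theorem pderiv_zero_linForm (a b : ℝ) : pderiv 0 (linForm a b) = C a := by
  simp [linForm]

theorem pderiv_one_linForm (a b : ℝ) : pderiv 1 (linForm a b) = C b := by
  simp [linForm]

theorem linForm_ne_zero {a b : ℝ} (hab : (a, b) ≠ (0, 0)) : linForm a b ≠ 0 := by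
  intro h
  have ha := congrArg (pderiv 0) h
  have hb := congrArg (pderiv 1) h
  simp only [pderiv_zero_linForm, pderiv_one_linForm, map_zero, C_eq_zero] at ha hb
  exact hab (by rw [ha, hb])

theorem isHomogeneous_linForm_pow (a b : ℝ) (d : ℕ) : (linForm a b ^ d).IsHomogeneous d := by
  simpa [linForm] using ((isHomogeneous_C_mul_X a 0).add (isHomogeneous_C_mul_X b 1)).pow d

theorem diffOp_linForm_linForm_pow (a b p q : ℝ) (d : ℕ) :
    diffOp (linForm a b) (linForm p q ^ d) =
      C (d * (a * p + b * q)) * linForm p q ^ (d - 1) := by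
  rw [diffOp_linForm, pderiv_pow, pderiv_pow, pderiv_zero_linForm, pderiv_one_linForm]
  simp only [map_mul, map_add, map_natCast]
  ring

theorem isHomogeneous_diffOp_linForm {f : MvPolynomial (Fin 2) ℝ} {d : ℕ}
    (hf : f.IsHomogeneous d) (a b : ℝ) : (diffOp (linForm a b) f).IsHomogeneous (d - 1) := by
  rw [diffOp_linForm]
  exact (hf.pderiv.C_mul a).add (hf.pderiv.C_mul b)

theorem diffOp_linForm_eq_zero_of_isHomogeneous_zero {f : MvPolynomial (Fin 2) ℝ}
    (hf : f.IsHomogeneous 0) (a b : ℝ) : diffOp (linForm a b) f = 0 := by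
  obtain ⟨c, rfl⟩ : ∃ c, f = C c :=
    ⟨_, totalDegree_eq_zero_iff_eq_C.mp ((totalDegree_zero_iff_isHomogeneous _).mpr hf)⟩
  simp [diffOp_linForm]

theorem isHomogeneous_diffOp_prod_linForm {f : MvPolynomial (Fin 2) ℝ} {d r : ℕ}
    (hf : f.IsHomogeneous d) (a b : Fin r → ℝ) :
    (diffOp (∏ i, linForm (a i) (b i)) f).IsHomogeneous (d - r) := by
  induction r with
  | zero => simpa [diffOp_one] using hf
  | succ r ih =>
    rw [Fin.prod_univ_succ, diffOp_mul, ← Nat.sub_sub]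
    exact isHomogeneous_diffOp_linForm (ih _ _) _ _

theorem diffOp_prod_linForm_eq_zero_of_lt {f : MvPolynomial (Fin 2) ℝ} {d r : ℕ}
    (hf : f.IsHomogeneous d) (a b : Fin r → ℝ) (hdr : d < r) :
    diffOp (∏ i, linForm (a i) (b i)) f = 0 := by
  obtain ⟨s, rfl⟩ : ∃ s, r = s + 1 := ⟨r - 1, by omega⟩
  rw [Fin.prod_univ_succ, diffOp_mul]
  refine diffOp_linForm_eq_zero_of_isHomogeneous_zero ?_ _ _
  simpa [show d - s = 0 by omega] using
    isHomogeneous_diffOp_prod_linForm hf (fun i => a i.succ) (fun i => b i.succ)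

theorem diffOp_prod_linForm_linForm_pow {d r : ℕ} (hrd : r ≤ d) (a b : Fin r → ℝ) {p q : ℝ}
    (hpq : ∀ i, a i * p + b i * q ≠ 0) :
    ∃ e : ℝ, e ≠ 0 ∧
      diffOp (∏ i, linForm (a i) (b i)) (linForm p q ^ d) = C e * linForm p q ^ (d - r) := by
  induction r with
  | zero => exact ⟨1, one_ne_zero, by simp [diffOp_one]⟩
  | succ r ih =>
    obtain ⟨e, he, heq⟩ := ih (by omega) (fun i => a i.succ) (fun i => b i.succ)
      (fun i => hpq i.succ)
    have hdr : ((d - r : ℕ) : ℝ) ≠ 0 := by norm_cast; omega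
    refine ⟨e * ((d - r : ℕ) * (a 0 * p + b 0 * q)), mul_ne_zero he (mul_ne_zero hdr (hpq 0)), ?_⟩
    rw [Fin.prod_univ_succ, diffOp_mul, heq, diffOp_C_mul_right, diffOp_linForm_linForm_pow,
      ← mul_assoc, ← map_mul, Nat.sub_sub]

theorem exists_eq_mul_of_mul_add_mul_eq_zero {a b c₁ c₂ : ℝ} (hab : (a, b) ≠ (0, 0))
    (h : a * c₁ + b * c₂ = 0) : ∃ t, c₁ = t * b ∧ c₂ = -(t * a) := by
  have hn : a ^ 2 + b ^ 2 ≠ 0 := by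
    intro h0
    exact hab (Prod.ext (by nlinarith) (by nlinarith))
  refine ⟨(b * c₁ - a * c₂) / (a ^ 2 + b ^ 2), ?_, ?_⟩
  · field_simp
    linear_combination a * h
  · field_simp
    linear_combination b * h

theorem exists_eq_C_mul_linForm_pow_of_diffOp_eq_zero {a b : ℝ} (hab : (a, b) ≠ (0, 0))
    {g : MvPolynomial (Fin 2) ℝ} {k : ℕ} (hg : g.IsHomogeneous k)
    (h : diffOp (linForm a b) g = 0) : ∃ c, g = C c * linForm b (-a) ^ k := by
  induction k generalizing g with
  | zero =>
    obtain ⟨c, rfl⟩ : ∃ c, g = C c :=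
      ⟨_, totalDegree_eq_zero_iff_eq_C.mp ((totalDegree_zero_iff_isHomogeneous _).mpr hg)⟩
    exact ⟨c, by rw [pow_zero, mul_one]⟩
  | succ k ih =>
    have hpderiv (i : Fin 2) : ∃ c, pderiv i g = C c * linForm b (-a) ^ k :=
      ih hg.pderiv (by rw [diffOp_pderiv, h, map_zero])
    obtain ⟨c₁, hc₁⟩ := hpderiv 0
    obtain ⟨c₂, hc₂⟩ := hpderiv 1
    have hrel : a * c₁ + b * c₂ = 0 := by
      have hL : linForm b (-a) ^ k ≠ 0 :=
        pow_ne_zero _ (linForm_ne_zero fun h0 => hab (by simp_all))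
      have : C (a * c₁ + b * c₂) * linForm b (-a) ^ k = 0 := by
        rw [← h, diffOp_linForm, hc₁, hc₂]
        simp only [map_add, map_mul]
        ring
      exact C_eq_zero.mp ((mul_eq_zero.mp this).resolve_right hL)
    obtain ⟨t, rfl, rfl⟩ := exists_eq_mul_of_mul_add_mul_eq_zero hab hrel
    -- Euler's identity `x ∂ₓg + y ∂ᵧg = (k + 1) g` recovers `g` from its partial derivatives.
    have heuler := hg.sum_X_mul_pderiv
    rw [Fin.sum_univ_two, hc₁, hc₂, nsmul_eq_mul] at heuler
    have hk : ((k + 1 : ℕ) : ℝ) ≠ 0 := by positivity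
    refine ⟨t / (k + 1 : ℕ), ?_⟩
    calc g = C ((k + 1 : ℕ) : ℝ)⁻¹ * (((k + 1 : ℕ) : MvPolynomial (Fin 2) ℝ) * g) := by
          rw [← mul_assoc, ← map_natCast C, ← map_mul, inv_mul_cancel₀ hk, C_1, one_mul]
      _ = C (t / (k + 1 : ℕ)) * linForm b (-a) ^ (k + 1) := by
          rw [← heuler, linForm]
          simp only [map_mul, map_neg, div_eq_mul_inv]
          ring

theorem exists_eq_sum_linForm_pow_of_diffOp_prod_eq_zero {r d : ℕ} {f : MvPolynomial (Fin 2) ℝ}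
    (hf : f.IsHomogeneous d) (a b : Fin r → ℝ) (hab : ∀ i, (a i, b i) ≠ (0, 0))
    (hdist : ∀ i j, i ≠ j → a i * b j ≠ a j * b i)
    (hker : diffOp (∏ i, linForm (a i) (b i)) f = 0) :
    ∃ c : Fin r → ℝ, f = ∑ i, C (c i) * linForm (b i) (-a i) ^ d := by
  induction r generalizing f with
  | zero => exact ⟨Fin.elim0, by simpa [diffOp_one] using hker⟩
  | succ r ih =>
    have hab' (i : Fin r) := hab i.succ
    have hdist' (i j : Fin r) (hij : i ≠ j) := hdist i.succ j.succ (Fin.succ_inj.not.mpr hij)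
    rw [Fin.prod_univ_succ, diffOp_mul] at hker
    by_cases hrd : r ≤ d
    · obtain ⟨c, hc⟩ := exists_eq_C_mul_linForm_pow_of_diffOp_eq_zero (hab 0)
        (isHomogeneous_diffOp_prod_linForm hf _ _) hker
      obtain ⟨e, he, heq⟩ := diffOp_prod_linForm_linForm_pow hrd (fun i => a i.succ)
        (fun i => b i.succ) (p := b 0) (q := -a 0) fun i h0 =>
          hdist i.succ 0 (Fin.succ_ne_zero i) (by linear_combination h0)
      set f₀ := C (c / e) * linForm (b 0) (-a 0) ^ d
      have hker' : diffOp (∏ i : Fin r, linForm (a i.succ) (b i.succ)) (f - f₀) = 0 := by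
        rw [diffOp_sub_right, diffOp_C_mul_right, heq, hc, ← mul_assoc, ← map_mul,
          div_mul_cancel₀ c he, sub_self]
      obtain ⟨c', hc'⟩ := ih (hf.sub ((isHomogeneous_linForm_pow _ _ d).C_mul _)) _ _
        hab' hdist' hker'
      exact ⟨Fin.cons (c / e) c', by
        rw [Fin.sum_univ_succ, ← sub_eq_iff_eq_add']
        simpa only [Fin.cons_zero, Fin.cons_succ] using hc'⟩
    · obtain ⟨c, hc⟩ := ih hf _ _ hab' hdist'
        (diffOp_prod_linForm_eq_zero_of_lt hf _ _ (by omega))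
      exact ⟨Fin.cons 0 c, by simpa [Fin.sum_univ_succ] using hc⟩

theorem exists_injective_fin_range_superset {α : Type*} [Infinite α] {m r : ℕ} (hmr : m ≤ r)
    (s : Fin m → α) : ∃ v : Fin r → α, Function.Injective v ∧ Set.range s ⊆ Set.range v := by
  classical
  obtain ⟨T, hsT, hT⟩ := Infinite.exists_superset_card_eq (Finset.univ.image s) r
    (Finset.card_image_le.trans (by simpa using hmr))
  let e : Fin r ≃ T := (T.equivFin.trans (finCongr hT)).symm
  refine ⟨fun j => e j, Subtype.coe_injective.comp e.injective, ?_⟩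
  rintro _ ⟨i, rfl⟩
  exact ⟨e.symm ⟨s i, hsT (Finset.mem_image_of_mem s (Finset.mem_univ i))⟩, by simp⟩

/-- `Option ℝ` models `ℙ¹(ℝ)`: `some t` is the point `(t : 1)` and `none` is `(1 : 0)`. -/
def projPoint : Option ℝ → ℝ × ℝ
  | none => (1, 0)
  | some t => (t, 1)

theorem projPoint_ne_zero (o : Option ℝ) : projPoint o ≠ (0, 0) := by
  cases o <;> simp [projPoint]

theorem projPoint_cross_ne {o o' : Option ℝ} (h : o ≠ o') :
    (projPoint o).1 * (projPoint o').2 ≠ (projPoint o').1 * (projPoint o).2 := by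
  cases o <;> cases o' <;> simp_all [projPoint]

noncomputable def orthPoint (p q : ℝ) : Option ℝ := if p = 0 then none else some (-q / p)

theorem projPoint_orthPoint (p q : ℝ) :
    (projPoint (orthPoint p q)).1 * p + (projPoint (orthPoint p q)).2 * q = 0 := by
  unfold orthPoint
  split_ifs with hp
  · simp [projPoint, hp]
  · simp only [projPoint, one_mul]
    field_simp
    ring

theorem exists_diffOp_prod_linForm_sum_eq_zero {d m r : ℕ} (hmr : m ≤ r) (c p q : Fin m → ℝ) :
    ∃ a b : Fin r → ℝ, (∀ i, (a i, b i) ≠ (0, 0)) ∧ (∀ i j, i ≠ j → a i * b j ≠ a j * b i) ∧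
      diffOp (∏ i, linForm (a i) (b i)) (∑ k, C (c k) * linForm (p k) (q k) ^ d) = 0 := by
  obtain ⟨v, hv, hrange⟩ :=
    exists_injective_fin_range_superset hmr fun k => orthPoint (p k) (q k)
  refine ⟨fun i => (projPoint (v i)).1, fun i => (projPoint (v i)).2,
    fun i => projPoint_ne_zero _, fun i j hij => projPoint_cross_ne (hv.ne hij), ?_⟩
  rw [diffOp_sum_right]
  refine Finset.sum_eq_zero fun k _ => ?_
  obtain ⟨i, hi⟩ : ∃ i, v i = orthPoint (p k) (q k) := hrange ⟨k, rfl⟩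
  rw [diffOp_C_mul_right, diffOp_eq_zero_of_dvd _ _ (Finset.dvd_prod_of_mem _ (Finset.mem_univ i)),
    mul_zero]
  simp only [diffOp_linForm_linForm_pow, hi, projPoint_orthPoint, mul_zero, C_0, zero_mul]

theorem exists_eq_sum_linForm_pow {f : MvPolynomial (Fin 2) ℝ} {d : ℕ} (hf : f.IsHomogeneous d) :
    ∃ r, ∃ c a b : Fin r → ℝ, f = ∑ i, C (c i) * linForm (a i) (b i) ^ d := by
  obtain ⟨c, hc⟩ := exists_eq_sum_linForm_pow_of_diffOp_prod_eq_zero hf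
    (fun i : Fin (d + 1) => ((i : ℕ) : ℝ)) (fun _ => 1) (by simp) (by simp [Fin.val_inj])
    (diffOp_prod_linForm_eq_zero_of_lt hf _ _ d.lt_succ_self)
  exact ⟨d + 1, c, _, _, hc⟩

/-- A real binary form `f` of degree `d` has real rank at most `r` iff the degree-`r`
part of its apolar ideal contains a (nonzero) form splitting into `r` pairwise
non-proportional real linear factors. -/
theorem realRank_le_iff_real_rooted_apolar (d r : ℕ) (f : MvPolynomial (Fin 2) ℝ)
    (hf : f.IsHomogeneous d) :
    realRank d f ≤ r ↔
      ∃ a b : Fin r → ℝ, (∀ i, (a i, b i) ≠ (0, 0)) ∧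
        (∀ i j, i ≠ j → a i * b j ≠ a j * b i) ∧
        diffOp (∏ i, linForm (a i) (b i)) f = 0 := by
  constructor
  · intro hle
    obtain ⟨c, p, q, hfpq⟩ := Nat.sInf_mem (exists_eq_sum_linForm_pow hf)
    rw [hfpq]
    exact exists_diffOp_prod_linForm_sum_eq_zero hle c p q
  · rintro ⟨a, b, hab, hdist, hker⟩
    obtain ⟨c, hc⟩ := exists_eq_sum_linForm_pow_of_diffOp_prod_eq_zero hf a b hab hdist hker
    exact Nat.sInf_le ⟨c, b, fun i => -a i, hc⟩
end

section
/- The real rank of a real binary form f of degree d is at least the number of distinct real roots of f in ℙ¹(ℝ). -/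
/-!
Dehomogenize: a form of degree `d` is `p.homogenize d` for a polynomial `p` of degree `≤ d`,
and its zeros in `ℙ¹(ℝ)` are the real roots of `p`, together with `∞` when `p.coeff d = 0`.
Given `f = ∑_{i ≤ r} cᵢ lᵢ^d`, the Möbius maps `x ↦ x + s` and `x ↦ 1/x` preserve this count and
can move the zero of `l_r` to `∞`, so that `l_r^d` becomes a constant killed by `d/dx`. By Rolle
differentiation loses at most one projective zero, and induction on `r` bounds the count by `r`.
The rank is finite since the `(x + j y)^d`, `0 ≤ j ≤ d`, span the forms of degree `d`
(Vandermonde).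
-/

open MvPolynomial

namespace Polynomial

variable {R : Type*} [CommRing R]

lemma reflect_finset_sum {ι : Type*} (s : Finset ι) (f : ι → R[X]) (N : ℕ) :
    reflect N (∑ i ∈ s, f i) = ∑ i ∈ s, reflect N (f i) := by
  ext k
  simp only [coeff_reflect, finsetSum_coeff]

lemma reflect_pow {f : R[X]} {N : ℕ} (hf : f.natDegree ≤ N) (n : ℕ) :
    reflect (n * N) (f ^ n) = reflect N f ^ n := by
  induction n with
  | zero => simp [reflect_one]
  | succ n ih =>
    rw [pow_succ, pow_succ, Nat.succ_mul,
      reflect_mul _ _ (natDegree_pow_le_of_le n hf) hf, ih]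

lemma reflect_one_C_mul_X_add_C (a b : R) : reflect 1 (C a * X + C b) = C b * X + C a := by
  rw [reflect_add, ← pow_one X, reflect_C_mul_X_pow, reflect_C, revAt_le le_rfl]
  simp [add_comm]

lemma coeff_taylor_of_natDegree_le {f : R[X]} {d : ℕ} (hf : f.natDegree ≤ d) (s : R) :
    (taylor s f).coeff d = f.coeff d := by
  rcases hf.lt_or_eq with hlt | rfl
  · rw [coeff_eq_zero_of_natDegree_lt hlt, coeff_eq_zero_of_natDegree_lt]
    rwa [natDegree_taylor]
  · rw [coeff_taylor_natDegree, coeff_natDegree]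

section SumLinPow

variable {r : ℕ}

/-- The dehomogenization `f(x, 1)` of `f = ∑ cᵢ (αᵢ x + βᵢ y)^d`. -/
noncomputable def sumLinPow (d : ℕ) (c α β : Fin r → R) : R[X] :=
  ∑ i, C (c i) * (C (α i) * X + C (β i)) ^ d

lemma natDegree_sumLinPow_le (d : ℕ) (c α β : Fin r → R) :
    (sumLinPow d c α β).natDegree ≤ d :=
  natDegree_sum_le_of_forall_le _ _ fun _ _ =>
    (natDegree_C_mul_le _ _).trans
      ((natDegree_pow_le_of_le d natDegree_linear_le).trans_eq (mul_one d))

lemma taylor_sumLinPow (d : ℕ) (c α β : Fin r → R) (s : R) :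
    taylor s (sumLinPow d c α β) = sumLinPow d c α (fun i => α i * s + β i) := by
  simp only [sumLinPow, map_sum, taylor_mul, taylor_pow, taylor_C, map_add, taylor_X]
  refine Finset.sum_congr rfl fun i _ => ?_
  simp only [C_mul]
  ring

lemma reflect_sumLinPow (d : ℕ) (c α β : Fin r → R) :
    reflect d (sumLinPow d c α β) = sumLinPow d c β α := by
  simp only [sumLinPow, reflect_finset_sum, reflect_C_mul]
  refine Finset.sum_congr rfl fun i _ => ?_
  have h := reflect_pow (natDegree_linear_le (a := α i) (b := β i)) d
  rw [mul_one, reflect_one_C_mul_X_add_C] at h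
  rw [h]

lemma derivative_sumLinPow (d : ℕ) (c α β : Fin r → R) :
    derivative (sumLinPow d c α β) = sumLinPow (d - 1) (fun i => c i * d * α i) α β := by
  simp only [sumLinPow, map_sum, derivative_C_mul, derivative_pow, derivative_add,
    derivative_C, derivative_X]
  refine Finset.sum_congr rfl fun i _ => ?_
  simp only [C_mul, mul_one, add_zero, C_eq_natCast]
  ring

lemma derivative_sumLinPow_of_last_eq_zero {d : ℕ} {c α β : Fin (r + 1) → R}
    (hα : α (Fin.last r) = 0) :
    derivative (sumLinPow d c α β) =
      sumLinPow (d - 1) (fun i => c i.castSucc * d * α i.castSucc) (fun i => α i.castSucc)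
        (fun i => β i.castSucc) := by
  rw [derivative_sumLinPow, sumLinPow, Fin.sum_univ_castSucc, hα]
  simp [sumLinPow]

end SumLinPow

section ProjRootCount

variable {K : Type*} [Field K]

lemma eval_inv_reflect_eq_zero_iff {p : K[X]} {N : ℕ} (hp : p.natDegree ≤ N) {x : K}
    (hx : x ≠ 0) : (reflect N p).eval x⁻¹ = 0 ↔ p.eval x = 0 := by
  let := invertibleOfNonzero hx
  have h := eval₂_reflect_eq_zero_iff (RingHom.id K) x N p hp
  rwa [invOf_eq_inv] at h

variable [DecidableEq K]

/-- For `p ≠ 0` of degree `≤ d`, the number of zeros in `ℙ¹(K)` of `p.homogenize d`: the roots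
of `p`, and `∞` exactly when `p.coeff d = 0`. -/
noncomputable def projRootCount (d : ℕ) (p : K[X]) : ℕ :=
  p.roots.toFinset.card + if p.coeff d = 0 then 1 else 0

lemma card_roots_toFinset_taylor {p : K[X]} (hp : p ≠ 0) (s : K) :
    (taylor s p).roots.toFinset.card = p.roots.toFinset.card := by
  have hps : taylor s p ≠ 0 := by rwa [Ne, taylor_eq_zero]
  refine Finset.card_nbij' (· + s) (· - s) (fun x hx => ?_) (fun x hx => ?_)
    (fun x _ => add_sub_cancel_right x s) (fun x _ => sub_add_cancel x s) <;>
    simp_all [taylor_eval]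

lemma projRootCount_taylor {p : K[X]} {d : ℕ} (hp : p ≠ 0) (hd : p.natDegree ≤ d) (s : K) :
    projRootCount d (taylor s p) = projRootCount d p := by
  rw [projRootCount, projRootCount, card_roots_toFinset_taylor hp,
    coeff_taylor_of_natDegree_le hd]

lemma card_roots_toFinset_erase_zero_add {p : K[X]} (hp : p ≠ 0) :
    (p.roots.toFinset.erase 0).card + (if p.coeff 0 = 0 then 1 else 0) =
      p.roots.toFinset.card := by
  split_ifs with h
  · exact Finset.card_erase_add_one (by simpa [hp, coeff_zero_eq_eval_zero] using h)
  · rw [add_zero, Finset.erase_eq_of_notMem (by simpa [hp, coeff_zero_eq_eval_zero] using h)]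

lemma card_roots_toFinset_erase_zero_reflect {p : K[X]} {N : ℕ} (hp : p ≠ 0)
    (hN : p.natDegree ≤ N) :
    ((reflect N p).roots.toFinset.erase 0).card = (p.roots.toFinset.erase 0).card := by
  have hr : reflect N p ≠ 0 := by rwa [Ne, reflect_eq_zero_iff]
  refine Finset.card_nbij' (·⁻¹) (·⁻¹) (fun x hx => ?_) (fun x hx => ?_)
    (fun x _ => inv_inv x) (fun x _ => inv_inv x)
  · simp only [Finset.coe_erase, Set.mem_sdiff, Finset.mem_coe, Multiset.mem_toFinset,
      mem_roots hr, mem_roots hp, IsRoot, Set.mem_singleton_iff] at hx ⊢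
    refine ⟨?_, inv_ne_zero hx.2⟩
    rw [← eval_inv_reflect_eq_zero_iff hN (inv_ne_zero hx.2), inv_inv]
    exact hx.1
  · simp only [Finset.coe_erase, Set.mem_sdiff, Finset.mem_coe, Multiset.mem_toFinset,
      mem_roots hr, mem_roots hp, IsRoot, Set.mem_singleton_iff] at hx ⊢
    exact ⟨(eval_inv_reflect_eq_zero_iff hN hx.2).mpr hx.1, inv_ne_zero hx.2⟩

lemma projRootCount_reflect {p : K[X]} {d : ℕ} (hp : p ≠ 0) (hd : p.natDegree ≤ d) :
    projRootCount d (reflect d p) = projRootCount d p := by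
  have hr : reflect d p ≠ 0 := by rwa [Ne, reflect_eq_zero_iff]
  rw [projRootCount, projRootCount, ← card_roots_toFinset_erase_zero_add hr,
    ← card_roots_toFinset_erase_zero_add hp, card_roots_toFinset_erase_zero_reflect hp hd,
    coeff_reflect, coeff_reflect, revAt_zero, revAt_le le_rfl, Nat.sub_self]
  ring

lemma projRootCount_le_one_of_derivative_eq_zero [CharZero K] {p : K[X]}
    (hp' : derivative p = 0) (d : ℕ) : projRootCount d p ≤ 1 := by
  rw [projRootCount, eq_C_of_derivative_eq_zero hp', roots_C]
  split_ifs <;> simp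

lemma projRootCount_le_projRootCount_derivative_add_one {p : ℝ[X]} {d : ℕ}
    (hd : p.natDegree ≤ d) (hp' : derivative p ≠ 0) :
    projRootCount d p ≤ projRootCount (d - 1) (derivative p) + 1 := by
  have hd1 : 1 ≤ d := (derivative_ne_zero.mp hp').bot_lt.trans_le hd
  have hcoeff : (derivative p).coeff (d - 1) = p.coeff d * d := by
    rw [coeff_derivative, Nat.sub_add_cancel hd1, Nat.cast_sub hd1, Nat.cast_one, sub_add_cancel]
  have := card_roots_toFinset_le_derivative p
  rw [projRootCount, projRootCount, hcoeff]
  split_ifs with h h' <;> simp_all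

end ProjRootCount

lemma exists_sumLinPow_last_eq_zero {K : Type*} [Field K] [DecidableEq K] {r d : ℕ}
    {c α β : Fin (r + 1) → K} (h : sumLinPow d c α β ≠ 0) :
    ∃ α' β' : Fin (r + 1) → K, α' (Fin.last r) = 0 ∧ sumLinPow d c α' β' ≠ 0 ∧
      projRootCount d (sumLinPow d c α' β') = projRootCount d (sumLinPow d c α β) := by
  by_cases hα : α (Fin.last r) = 0
  · exact ⟨α, β, hα, h, rfl⟩
  -- Translate the zero of the last linear form to `0`, then `x ↦ 1/x` sends it to `∞`.
  set γ := fun i => α i * (-β (Fin.last r) / α (Fin.last r)) + β i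
  have hγ : γ (Fin.last r) = 0 := by
    simp only [γ]
    field_simp
    ring
  have hT := taylor_sumLinPow d c α β (-β (Fin.last r) / α (Fin.last r))
  have hT0 : sumLinPow d c α γ ≠ 0 := by rwa [← hT, Ne, taylor_eq_zero]
  refine ⟨γ, α, hγ, ?_, ?_⟩
  · rwa [← reflect_sumLinPow, Ne, reflect_eq_zero_iff]
  · rw [← reflect_sumLinPow, projRootCount_reflect hT0 (natDegree_sumLinPow_le ..), ← hT,
      projRootCount_taylor h (natDegree_sumLinPow_le ..)]

theorem projRootCount_sumLinPow_le {r d : ℕ} {c α β : Fin r → ℝ}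
    (h : sumLinPow d c α β ≠ 0) :
    projRootCount d (sumLinPow d c α β) ≤ r := by
  induction r generalizing d with
  | zero => simp [sumLinPow] at h
  | succ r ih =>
    obtain ⟨α', β', hlast, h', hcount⟩ := exists_sumLinPow_last_eq_zero h
    rw [← hcount]
    by_cases hp' : derivative (sumLinPow d c α' β') = 0
    · exact (projRootCount_le_one_of_derivative_eq_zero hp' d).trans (by omega)
    calc projRootCount d (sumLinPow d c α' β')
        ≤ projRootCount (d - 1) (derivative (sumLinPow d c α' β')) + 1 :=
          projRootCount_le_projRootCount_derivative_add_one (natDegree_sumLinPow_le ..) hp'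
      _ ≤ r + 1 := by
          rw [derivative_sumLinPow_of_last_eq_zero hlast] at hp' ⊢
          exact Nat.add_le_add_right (ih hp') 1

lemma exists_eq_sumLinPow {K : Type*} [Field K] [CharZero K] {p : K[X]} {d : ℕ}
    (hp : p.natDegree ≤ d) :
    ∃ c : Fin (d + 1) → K, p = sumLinPow d c 1 fun j => (j : ℕ) := by
  set V := (Matrix.vandermonde fun j : Fin (d + 1) => ((j : ℕ) : K)).transpose
  have hV : IsUnit V := by
    rw [Matrix.isUnit_iff_isUnit_det, Matrix.det_transpose, isUnit_iff_ne_zero,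
      Matrix.det_vandermonde_ne_zero_iff]
    intro i j hij
    exact Fin.ext (Nat.cast_injective hij)
  obtain ⟨c, hc⟩ := Matrix.mulVec_surjective_iff_isUnit.mpr hV
    fun q => p.coeff (d - q) / d.choose (d - q)
  refine ⟨c, ext fun k => ?_⟩
  have hcoeff : (sumLinPow d c 1 fun j => (j : ℕ)).coeff k =
      d.choose k * ∑ j : Fin (d + 1), ((j : ℕ) : K) ^ (d - k) * c j := by
    simp only [sumLinPow, finsetSum_coeff, Pi.one_apply, map_one, one_mul, coeff_C_mul,
      coeff_X_add_C_pow, Finset.mul_sum]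
    exact Finset.sum_congr rfl fun j _ => by ring
  rcases le_or_gt k d with hk | hk
  · have hsol := congrFun hc ⟨d - k, by omega⟩
    simp only [V, Matrix.mulVec, dotProduct, Matrix.transpose_apply, Matrix.vandermonde,
      Matrix.of_apply, Nat.sub_sub_self hk] at hsol
    have hch : (d.choose k : K) ≠ 0 := by exact_mod_cast (Nat.choose_pos hk).ne'
    rw [hcoeff, hsol]
    field_simp
  · rw [coeff_eq_zero_of_natDegree_lt (hp.trans_lt hk), hcoeff, Nat.choose_eq_zero_of_lt hk]
    simp

lemma natDegree_aeval_X_one_le {R : Type*} [CommRing R] {f : MvPolynomial (Fin 2) R} {d : ℕ}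
    (hf : f.IsHomogeneous d) : (MvPolynomial.aeval ![(X : R[X]), 1] f).natDegree ≤ d := by
  rw [f.as_sum, map_sum]
  refine natDegree_sum_le_of_forall_le _ _ fun m hm => ?_
  have hdeg : m 0 + m 1 = d := by
    simp [hf.degree_eq_sum_deg_support hm, ← Finsupp.degree_apply, Finsupp.degree_eq_sum]
  rw [MvPolynomial.aeval_monomial, Finsupp.prod_fintype _ _ (by simp), Fin.prod_univ_two]
  simp only [Matrix.cons_val_zero, Matrix.cons_val_one, one_pow, mul_one, ← C_eq_algebraMap]
  exact (natDegree_C_mul_X_pow_le _ _).trans (by omega)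

lemma exists_homogenize_eq {R : Type*} [CommRing R] {f : MvPolynomial (Fin 2) R} {d : ℕ}
    (hf : f.IsHomogeneous d) : ∃ p : R[X], p.natDegree ≤ d ∧ p.homogenize d = f :=
  ⟨_, natDegree_aeval_X_one_le hf, homogenize_eq_of_isHomogeneous hf rfl⟩

lemma eval_homogenize_of_snd_eq_zero {R : Type*} [CommRing R] (p : R[X]) (n : ℕ)
    {x : Fin 2 → R} (hx : x 1 = 0) :
    MvPolynomial.eval x (p.homogenize n) = p.coeff n * x 0 ^ n := by
  rw [homogenize, map_sum, Finset.sum_eq_single (n, 0)]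
  · simp [MvPolynomial.eval_monomial, Finsupp.prod_fintype, Fin.prod_univ_two]
  · rintro ⟨k, l⟩ hkl hne
    have hl : l ≠ 0 := by
      rintro rfl
      simp_all
    simp [MvPolynomial.eval_monomial, Finsupp.prod_fintype, Fin.prod_univ_two, hx, hl]
  · simp

open Finset in
lemma card_le_projRootCount {K : Type*} [Field K] [DecidableEq K] {p : K[X]} {d t : ℕ}
    (hp : p ≠ 0) (hd : p.natDegree ≤ d) {a b : Fin t → K} (hnz : ∀ i, (a i, b i) ≠ (0, 0))
    (hnp : ∀ i j, i ≠ j → a i * b j ≠ a j * b i)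
    (hroot : ∀ i, MvPolynomial.eval ![a i, b i] (p.homogenize d) = 0) :
    t ≤ projRootCount d p := by
  have hfin : #{i | ¬b i = 0} ≤ p.roots.toFinset.card := by
    refine card_le_card_of_injOn (fun i => a i / b i) (fun i hi => ?_)
      fun i hi j hj hij => ?_
    · have hbi : b i ≠ 0 := (mem_filter.mp hi).2
      have h := hroot i
      rw [eval_homogenize hd _ (by simpa using hbi)] at h
      simpa [hp, hbi] using h
    · exact by_contra fun hne => hnp i j hne <|
        (div_eq_div_iff (mem_filter.mp hi).2 (mem_filter.mp hj).2).mp hij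
  have hinf : #{i | b i = 0} ≤ if p.coeff d = 0 then 1 else 0 := by
    split_ifs with h
    · refine card_le_one.mpr fun i hi j hj => by_contra fun hne => hnp i j hne ?_
      simp [(mem_filter.mp hi).2, (mem_filter.mp hj).2]
    · refine (card_eq_zero.mpr (filter_eq_empty_iff.mpr fun i _ hbi => h ?_)).le
      have hai : a i ≠ 0 := fun hai => hnz i (by simp [hai, hbi])
      have h := hroot i
      rw [eval_homogenize_of_snd_eq_zero _ _ (by simpa using hbi)] at h
      simpa [hai] using h
  have hsplit := card_filter_add_card_filter_not (s := univ) (fun i => b i = 0)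
  rw [card_univ, Fintype.card_fin] at hsplit
  rw [projRootCount]
  omega

lemma homogenize_sumLinPow {r : ℕ} (d : ℕ) (c a b : Fin r → ℝ) :
    (sumLinPow d c a b).homogenize d = ∑ i, MvPolynomial.C (c i) * linForm (a i) (b i) ^ d := by
  refine homogenize_eq_of_isHomogeneous ?_ ?_
  · refine MvPolynomial.IsHomogeneous.sum _ _ _ fun i _ => ?_
    simpa [linForm] using (((MvPolynomial.isHomogeneous_C_mul_X (a i) 0).add
      (MvPolynomial.isHomogeneous_C_mul_X (b i) 1)).pow d).C_mul (c i)
  · simp [sumLinPow, linForm]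

theorem projRootCount_le_realRank {p : ℝ[X]} {d : ℕ} (hd : p.natDegree ≤ d) (hp : p ≠ 0) :
    projRootCount d p ≤ realRank d (p.homogenize d) := by
  refine le_csInf ?_ fun r ⟨c, a, b, hdec⟩ => ?_
  · obtain ⟨c, hc⟩ := exists_eq_sumLinPow hd
    exact ⟨d + 1, c, 1, _, by rw [hc, homogenize_sumLinPow]⟩
  · have hpr : p = sumLinPow d c a b := by
      have := congrArg (MvPolynomial.aeval ![(X : ℝ[X]), 1]) hdec
      rwa [aeval_homogenize_X_one _ hd, ← homogenize_sumLinPow,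
        aeval_homogenize_X_one _ (natDegree_sumLinPow_le ..)] at this
    subst hpr
    exact projRootCount_sumLinPow_le hp

end Polynomial

/-- The real rank of a nonzero real binary form `f` of degree `d` is at least the number
of its distinct real roots in `ℙ¹(ℝ)`: given `t` pairwise non-proportional nonzero real
roots of `f`, one has `t ≤ rk(f)`. -/
theorem card_real_roots_le_realRank (d t : ℕ) (f : MvPolynomial (Fin 2) ℝ)
    (hf : f.IsHomogeneous d) (hf0 : f ≠ 0) (a b : Fin t → ℝ)
    (hnz : ∀ i, (a i, b i) ≠ (0, 0))
    (hnp : ∀ i j, i ≠ j → a i * b j ≠ a j * b i)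
    (hroot : ∀ i, MvPolynomial.eval ![a i, b i] f = 0) :
    t ≤ realRank d f := by
  obtain ⟨p, hd, rfl⟩ := Polynomial.exists_homogenize_eq hf
  have hp : p ≠ 0 := by
    rintro rfl
    exact hf0 (Polynomial.homogenize_zero d)
  exact (Polynomial.card_le_projRootCount hp hd hnz hnp hroot).trans
    (Polynomial.projRootCount_le_realRank hd hp)
end
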